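/- Let P be a user distribution on relevance vectors over a finite document set X with metric D, and suppose P is conditionally L-continuous with respect to (X, D). Fix x ∈ X and a subset S ⊆ X. Then for every document y ∈ X and every y' ∈ S, one has |μ(x|Z_{S ∪ {y}}) − μ(x|Z_{S ∪ {y'}})| ≤ 4·D(y, y'); equivalently, since S ∪ {y'} = S, one has |μ(x|Z_{S ∪ {y}}) − μ(x|Z_S)| ≤ 4·D(y, y'). -/
import Mathlib


open scoped Classical
open Finset

/-- Probability of an event under a distribution `P` on relevance vectors. -/
noncomputable def pr {X : Type*} [Fintype X] [DecidableEq X]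
    (P : (X → Bool) → ℝ) (E : Set (X → Bool)) : ℝ :=
  ∑ π : X → Bool, if π ∈ E then P π else 0

/-- Conditional probability `P(E | F)`. -/
noncomputable def condPr {X : Type*} [Fintype X] [DecidableEq X]
    (P : (X → Bool) → ℝ) (E F : Set (X → Bool)) : ℝ :=
  pr P (E ∩ F) / pr P F

/-- The event `Z_S` that all documents in `S` are irrelevant. -/
def ZS {X : Type*} (S : Finset X) : Set (X → Bool) :=
  {π | ∀ s ∈ S, π s = false}

/-- Conditional pointwise mean `μ(x | Z_S)`. -/
noncomputable def condMean {X : Type*} [Fintype X] [DecidableEq X]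
    (P : (X → Bool) → ℝ) (x : X) (S : Finset X) : ℝ :=
  condPr P {π | π x = true} (ZS S)

lemma pr_nonneg {X : Type*} [Fintype X] [DecidableEq X]
    (P : (X → Bool) → ℝ) (hP0 : ∀ π, 0 ≤ P π) (E : Set (X → Bool)) :
    0 ≤ pr P E :=
  Finset.sum_nonneg fun π _ => by split <;> simp [hP0 π]

lemma pr_mono {X : Type*} [Fintype X] [DecidableEq X]
    (P : (X → Bool) → ℝ) (hP0 : ∀ π, 0 ≤ P π) {E F : Set (X → Bool)}
    (h : E ⊆ F) : pr P E ≤ pr P F := by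
  apply Finset.sum_le_sum
  intro π _
  by_cases hE : π ∈ E
  · simp [hE, h hE]
  · simp only [hE, if_false]
    split <;> simp [hP0 π]

lemma pr_split {X : Type*} [Fintype X] [DecidableEq X]
    (P : (X → Bool) → ℝ) (E : Set (X → Bool)) (y : X) :
    pr P E = pr P (E ∩ {π | π y = false}) + pr P (E ∩ {π | π y = true}) := by
  unfold pr
  rw [← Finset.sum_add_distrib]
  apply Finset.sum_congr rfl
  intro π _
  by_cases hE : π ∈ E <;> cases hy : π y <;>
    simp [hE, hy, Set.mem_inter_iff, Set.mem_setOf_eq]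

/-- swapping one document `y` for a document `y' ∈ S` changes the
conditional pointwise mean by at most `4·D(y, y')`. -/
theorem condMean_insert_swap_le_four_dist
    {X : Type*} [Fintype X] [DecidableEq X] [MetricSpace X]
    (P : (X → Bool) → ℝ)
    (hP0 : ∀ π, 0 ≤ P π) (hP1 : ∑ π : X → Bool, P π = 1)
    (hZ : ∀ S : Finset X, 0 < pr P (ZS S))
    (hLip : ∀ (x y : X) (S : Finset X),
      |condMean P x S - condMean P y S| ≤ dist x y)
    (x : X) (S : Finset X) (y y' : X) (hy' : y' ∈ S) :
    |condMean P x (insert y S) - condMean P x (insert y' S)| ≤ 4 * dist y y' ∧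
    |condMean P x (insert y S) - condMean P x S| ≤ 4 * dist y y' := by
  have hins : insert y' S = S := Finset.insert_eq_self.mpr hy'
  -- μ(y'|Z_S) = 0
  have hmu0 : condMean P y' S = 0 := by
    have hemp : ({π : X → Bool | π y' = true} ∩ ZS S) = (∅ : Set (X → Bool)) := by
      ext π
      simp only [Set.mem_inter_iff, Set.mem_setOf_eq, Set.mem_empty_iff_false, iff_false,
        not_and, ZS]
      intro h1 h2
      rw [h2 y' hy'] at h1
      exact Bool.false_ne_true h1
    have : pr P ({π : X → Bool | π y' = true} ∩ ZS S) = 0 := by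
      rw [hemp]; unfold pr; simp
    simp [condMean, condPr, this]
  -- μ(y|Z_S) ≤ D(y,y')
  have hD0 : (0:ℝ) ≤ dist y y' := dist_nonneg
  have hmuy : condMean P y S ≤ dist y y' := by
    have := hLip y y' S
    rw [hmu0] at this
    have := abs_le.mp this
    linarith [this.2]
  -- set up quantities
  set Z := ZS S with hZdef
  set A : Set (X → Bool) := {π | π x = true} with hA
  have hZy : ZS (insert y S) = Z ∩ {π | π y = false} := by
    ext π
    simp only [ZS, Set.mem_setOf_eq, Set.mem_inter_iff, Finset.forall_mem_insert, hZdef]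
    tauto
  set z := pr P Z with hz
  set z0 := pr P (Z ∩ {π | π y = false}) with hz0
  set b := pr P (Z ∩ {π | π y = true}) with hb
  set a0 := pr P (A ∩ (Z ∩ {π | π y = false})) with ha0
  set a1 := pr P (A ∩ Z ∩ {π | π y = true}) with ha1
  have hzpos : 0 < z := hZ S
  have hz0pos : 0 < z0 := by rw [hz0, ← hZy]; exact hZ (insert y S)
  have hzsplit : z = z0 + b := pr_split P Z y
  have hasplit : pr P (A ∩ Z) = a0 + a1 := by
    have := pr_split P (A ∩ Z) y
    rw [Set.inter_assoc] at this
    exact this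
  have ha0nn : 0 ≤ a0 := pr_nonneg P hP0 _
  have ha1nn : 0 ≤ a1 := pr_nonneg P hP0 _
  have hbnn : 0 ≤ b := pr_nonneg P hP0 _
  have ha0le : a0 ≤ z0 := pr_mono P hP0 Set.inter_subset_right
  have ha1le : a1 ≤ b := by
    apply pr_mono P hP0
    intro π hπ
    exact ⟨hπ.1.2, hπ.2⟩
  -- μ(y|Z_S) = b / z
  have hmuyval : condMean P y S = b / z := by
    unfold condMean condPr
    rw [← hz]
    congr 1
    rw [hb, hZdef, Set.inter_comm]
  -- key bound
  have hkey : |condMean P x (insert y S) - condMean P x S| ≤ dist y y' := by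
    have h1 : condMean P x (insert y S) = a0 / z0 := by
      unfold condMean condPr
      rw [hZy, ← ha0, ← hz0]
    have h2 : condMean P x S = (a0 + a1) / z := by
      unfold condMean condPr
      rw [← hasplit, ← hz]
    rw [h1, h2]
    have hd : a0 / z0 - (a0 + a1) / z = (a0 * b - z0 * a1) / (z0 * z) := by
      rw [hzsplit]
      field_simp
      ring
    rw [hd, abs_div, abs_of_pos (mul_pos hz0pos hzpos),
      div_le_iff₀ (mul_pos hz0pos hzpos)]
    have hnum : |a0 * b - z0 * a1| ≤ z0 * b := by
      rw [abs_le]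
      constructor <;> nlinarith
    calc |a0 * b - z0 * a1| ≤ z0 * b := hnum
      _ ≤ z0 * (dist y y' * z) := by
          have : b / z ≤ dist y y' := by rw [← hmuyval]; exact hmuy
          have hbz : b ≤ dist y y' * z := by
            rw [div_le_iff₀ hzpos] at this; linarith
          nlinarith
      _ = dist y y' * (z0 * z) := by ring
  constructor
  · rw [hins]; linarith [abs_nonneg (condMean P x (insert y S) - condMean P x S)]
  · linarith [abs_nonneg (condMean P x (insert y S) - condMean P x S)]
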